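/- The Gaussian lattice L_z has exactly 36 involutive anti-isometries. -/

import Mathlib

/-!
An anti-linear map of `ℤ[i]²` is determined by the images `u, v` of the standard basis. It is an
anti-isometry of `L_z` exactly when the Gram matrix of `(u, v)` is `H̄`, and it is involutive
exactly when it sends `u, v` back to the standard basis. Since `H` is negative definite, a vector
of norm `-2` has all four integer coordinates in `{-1, 0, 1}`, so the admissible pairs `(u, v)`
can be enumerated; there are `36` of them.
-/

/-- The imaginary unit `i` in the Gaussian integers `ℤ[i]`. -/
def gi : GaussianInt := Zsqrtd.sqrtd

/-- The underlying `ℤ[i]`-module of the Gaussian lattice `L_z`. -/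
abbrev Lz : Type := GaussianInt × GaussianInt

/-- The Hermitian form of `L_z`, given by the matrix `[[-2, 1-i], [1+i, -2]]`;
conjugate-linear in the first argument, linear in the second. -/
def hz (x y : Lz) : GaussianInt :=
  star x.1 * (-2) * y.1 + star x.1 * (1 - gi) * y.2 +
    star x.2 * (1 + gi) * y.1 + star x.2 * (-2) * y.2

/-- An isometry of `L_z`: a `ℤ[i]`-linear bijection preserving the form `hz`. -/
def IsIsomLz (A : Lz → Lz) : Prop :=
  Function.Bijective A ∧ (∀ x y : Lz, A (x + y) = A x + A y) ∧
    (∀ (c : GaussianInt) (x : Lz), A (c • x) = c • A x) ∧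
    ∀ x y : Lz, hz (A x) (A y) = hz x y

/-- An involutive anti-isometry of `L_z`: an additive bijection `ν` with
`ν (c • v) = c̄ • ν v`, `hz (ν x) (ν y) = conj (hz x y)` and `ν ∘ ν = id`. -/
def IsInvAntiIsomLz (ν : Lz → Lz) : Prop :=
  Function.Bijective ν ∧ (∀ x y : Lz, ν (x + y) = ν x + ν y) ∧
    (∀ (c : GaussianInt) (x : Lz), ν (c • x) = star c • ν x) ∧
    (∀ x y : Lz, hz (ν x) (ν y) = star (hz x y)) ∧
    ∀ x : Lz, ν (ν x) = x

/-- The anti-isometry `κ₁ : (x₁, x₂) ↦ (−x̄₂, −x̄₁)` of `L_z`. -/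
def kappa1 (x : Lz) : Lz := (-(star x.2), -(star x.1))

/-- The anti-isometry `κ₃ : (x₁, x₂) ↦ (i·x̄₁, −x̄₂)` of `L_z`. -/
def kappa3 (x : Lz) : Lz := (gi * star x.1, -(star x.2))

section AntiLinear

variable {R : Type*} [CommRing R] [StarRing R]

def antiLinearOfBasis (u v : R × R) (x : R × R) : R × R := star x.1 • u + star x.2 • v

lemma antiLinearOfBasis_add (u v x y : R × R) :
    antiLinearOfBasis u v (x + y) = antiLinearOfBasis u v x + antiLinearOfBasis u v y := by
  simp only [antiLinearOfBasis, Prod.fst_add, Prod.snd_add, star_add, add_smul]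
  abel

lemma antiLinearOfBasis_smul (u v : R × R) (c : R) (x : R × R) :
    antiLinearOfBasis u v (c • x) = star c • antiLinearOfBasis u v x := by
  simp only [antiLinearOfBasis, Prod.smul_fst, Prod.smul_snd, smul_eq_mul, star_mul,
    smul_add, mul_smul, mul_comm (star x.1), mul_comm (star x.2)]

lemma antiLinearOfBasis_injective :
    Function.Injective fun p : (R × R) × (R × R) => antiLinearOfBasis p.1 p.2 := by
  intro p q h
  have h₁ := congrFun h (1, 0)
  have h₂ := congrFun h (0, 1)
  simp only [antiLinearOfBasis, star_one, star_zero, one_smul, zero_smul, add_zero,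
    zero_add] at h₁ h₂
  exact Prod.ext h₁ h₂

lemma eq_antiLinearOfBasis {ν : R × R → R × R} (hadd : ∀ x y, ν (x + y) = ν x + ν y)
    (hsmul : ∀ (c : R) x, ν (c • x) = star c • ν x) :
    ν = antiLinearOfBasis (ν (1, 0)) (ν (0, 1)) := by
  funext x
  have hx : x = x.1 • ((1, 0) : R × R) + x.2 • ((0, 1) : R × R) := by
    ext <;> simp
  rw [hx, hadd, hsmul, hsmul]
  simp [antiLinearOfBasis]

lemma antiLinearOfBasis_involutive_iff (u v : R × R) :
    Function.Involutive (antiLinearOfBasis u v) ↔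
      antiLinearOfBasis u v u = (1, 0) ∧ antiLinearOfBasis u v v = (0, 1) := by
  constructor
  · intro h
    have h₁ := h (1, 0)
    have h₂ := h (0, 1)
    simp only [antiLinearOfBasis, star_one, star_zero, one_smul, zero_smul, add_zero,
      zero_add] at h₁ h₂
    exact ⟨h₁, h₂⟩
  · rintro ⟨hu, hv⟩ x
    show antiLinearOfBasis u v (star x.1 • u + star x.2 • v) = x
    rw [antiLinearOfBasis_add, antiLinearOfBasis_smul, antiLinearOfBasis_smul, hu, hv,
      star_star, star_star]
    ext <;> simp

end AntiLinear

lemma star_gi : star gi = -gi := by decide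

-- The Gram matrix of `(u, v)` under `hz` is the conjugate of `H`.
def HasConjGram (u v : Lz) : Prop :=
  hz u u = -2 ∧ hz u v = 1 + gi ∧ hz v u = 1 - gi ∧ hz v v = -2

lemma hz_antiLinearOfBasis {u v : Lz} (h : HasConjGram u v) (x y : Lz) :
    hz (antiLinearOfBasis u v x) (antiLinearOfBasis u v y) = star (hz x y) := by
  obtain ⟨e₁₁, e₁₂, e₂₁, e₂₂⟩ := h
  simp only [antiLinearOfBasis, hz, Prod.fst_add, Prod.snd_add, Prod.smul_fst,
    Prod.smul_snd, smul_eq_mul, star_add, star_mul, star_star, star_sub, star_one,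
    star_neg, star_ofNat, star_gi] at e₁₁ e₁₂ e₂₁ e₂₂ ⊢
  linear_combination x.1 * star y.1 * e₁₁ + x.1 * star y.2 * e₁₂ +
    x.2 * star y.1 * e₂₁ + x.2 * star y.2 * e₂₂

def IsInvAntiFrame (p : Lz × Lz) : Prop :=
  HasConjGram p.1 p.2 ∧
    antiLinearOfBasis p.1 p.2 p.1 = (1, 0) ∧ antiLinearOfBasis p.1 p.2 p.2 = (0, 1)

instance : DecidablePred IsInvAntiFrame := fun _ => by
  unfold IsInvAntiFrame HasConjGram; infer_instance

lemma star_hz_standardBasis :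
    star (hz (1, 0) (1, 0)) = -2 ∧ star (hz (1, 0) (0, 1)) = 1 + gi ∧
      star (hz (0, 1) (1, 0)) = 1 - gi ∧ star (hz (0, 1) (0, 1)) = -2 := by
  decide

lemma isInvAntiIsomLz_iff (ν : Lz → Lz) :
    IsInvAntiIsomLz ν ↔ ∃ p, IsInvAntiFrame p ∧ antiLinearOfBasis p.1 p.2 = ν := by
  constructor
  · rintro ⟨-, hadd, hsmul, hform, hinv⟩
    have hrep : ν = antiLinearOfBasis (ν (1, 0)) (ν (0, 1)) := eq_antiLinearOfBasis hadd hsmul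
    obtain ⟨h₁₁, h₁₂, h₂₁, h₂₂⟩ := star_hz_standardBasis
    have hgram : HasConjGram (ν (1, 0)) (ν (0, 1)) :=
      ⟨(hform _ _).trans h₁₁, (hform _ _).trans h₁₂, (hform _ _).trans h₂₁,
        (hform _ _).trans h₂₂⟩
    have hinvol : Function.Involutive (antiLinearOfBasis (ν (1, 0)) (ν (0, 1))) := by
      rw [← hrep]
      exact hinv
    exact ⟨(ν (1, 0), ν (0, 1)), ⟨hgram, (antiLinearOfBasis_involutive_iff _ _).1 hinvol⟩,
      hrep.symm⟩
  · rintro ⟨⟨u, v⟩, ⟨hgram, hinv⟩, rfl⟩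
    have hinvol := (antiLinearOfBasis_involutive_iff u v).2 hinv
    exact ⟨hinvol.bijective, antiLinearOfBasis_add u v, antiLinearOfBasis_smul u v,
      hz_antiLinearOfBasis hgram, hinvol⟩

noncomputable def unitBox : Finset GaussianInt :=
  (Finset.Icc (-1 : ℤ) 1 ×ˢ Finset.Icc (-1 : ℤ) 1).image fun p => ⟨p.1, p.2⟩

lemma re_hz_self (a c : GaussianInt) :
    (hz (a, c) (a, c)).re = -2 * (a.re ^ 2 + a.im ^ 2 + c.re ^ 2 + c.im ^ 2 -
      (a.re * c.re + a.im * c.im) - (a.re * c.im - a.im * c.re)) := by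
  simp only [hz, gi, Zsqrtd.re_add, Zsqrtd.re_sub, Zsqrtd.re_neg, Zsqrtd.re_mul,
    Zsqrtd.im_add, Zsqrtd.im_sub, Zsqrtd.im_neg, Zsqrtd.im_mul, Zsqrtd.re_star, Zsqrtd.im_star,
    Zsqrtd.re_ofNat, Zsqrtd.im_ofNat, Zsqrtd.re_one, Zsqrtd.im_one, Zsqrtd.re_sqrtd,
    Zsqrtd.im_sqrtd]
  ring

lemma mem_unitBox_of_hz_self_eq {v : Lz} (hv : hz v v = -2) : v ∈ unitBox ×ˢ unitBox := by
  obtain ⟨⟨a₁, a₂⟩, ⟨c₁, c₂⟩⟩ := v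
  have h : (-2 : ℤ) = -2 * (a₁ ^ 2 + a₂ ^ 2 + c₁ ^ 2 + c₂ ^ 2 -
      (a₁ * c₁ + a₂ * c₂) - (a₁ * c₂ - a₂ * c₁)) := by
    rw [← re_hz_self ⟨a₁, a₂⟩ ⟨c₁, c₂⟩, hv]
    rfl
  -- With `S + T i = ā c`, the hypothesis says `N - S - T = 1` for `N = |a|² + |c|²`, while
  -- `(S + T)² ≤ 2 |a|² |c|² ≤ N² / 2`.
  have hb : a₁ ^ 2 + a₂ ^ 2 + c₁ ^ 2 + c₂ ^ 2 ≤ 3 := by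
    nlinarith [sq_nonneg (a₁ * c₁ + a₂ * c₂ - (a₁ * c₂ - a₂ * c₁)),
      sq_nonneg (a₁ ^ 2 + a₂ ^ 2 - c₁ ^ 2 - c₂ ^ 2)]
  have mem_Icc_of_sq_le (x : ℤ) (hx : x ^ 2 ≤ 3) : x ∈ Finset.Icc (-1 : ℤ) 1 := by
    rw [Finset.mem_Icc]
    constructor <;> nlinarith
  refine Finset.mem_product.2 ⟨Finset.mem_image.2 ⟨(a₁, a₂), ?_, rfl⟩,
    Finset.mem_image.2 ⟨(c₁, c₂), ?_, rfl⟩⟩ <;>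
  exact Finset.mem_product.2 ⟨mem_Icc_of_sq_le _ (by nlinarith), mem_Icc_of_sq_le _ (by nlinarith)⟩

noncomputable def minusTwoVectors : Finset Lz :=
  (unitBox ×ˢ unitBox).filter fun v => hz v v = -2

lemma mem_minusTwoVectors {v : Lz} (hv : hz v v = -2) : v ∈ minusTwoVectors :=
  Finset.mem_filter.2 ⟨mem_unitBox_of_hz_self_eq hv, hv⟩

lemma card_invAntiFrames :
    ((minusTwoVectors ×ˢ minusTwoVectors).filter IsInvAntiFrame).card = 36 := by
  decide

/-- The Gaussian lattice `L_z` has exactly `36` involutive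
anti-isometries. -/
theorem stmt9 : {ν : Lz → Lz | IsInvAntiIsomLz ν}.ncard = 36 := by
  have hisoms : {ν : Lz → Lz | IsInvAntiIsomLz ν} =
      (fun p : Lz × Lz => antiLinearOfBasis p.1 p.2) '' {p | IsInvAntiFrame p} := by
    ext ν
    simp [isInvAntiIsomLz_iff]
  have hframes : {p | IsInvAntiFrame p} =
      ↑((minusTwoVectors ×ˢ minusTwoVectors).filter IsInvAntiFrame) := by
    ext p
    simp only [Finset.coe_filter, Set.mem_ofPred_eq, iff_and_self]
    exact fun hp => Finset.mem_product.2
      ⟨mem_minusTwoVectors hp.1.1, mem_minusTwoVectors hp.1.2.2.2⟩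
  rw [hisoms, Set.ncard_image_of_injective _ antiLinearOfBasis_injective, hframes,
    Set.ncard_coe_finset, card_invAntiFrames]
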